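/- Fix b > 0, natural numbers N_1, N_2, n with n ≤ min(N_1, N_2), and γ_1, γ_2 ∈ ℝ with γ_1 − γ_2 > N_2 and γ_1 − γ_2 not an integer. Define W_1(m) = (−b)^m / (m! · (N_1 − m)! · Γ(m + γ_1 − γ_2 + 1) · Γ(N_2 − m − γ_1 + γ_2 + 1)) for 0 ≤ m ≤ N_1, W_2(m) = (−b)^m / (Γ(m + γ_2 − γ_1 + 1) · Γ(N_1 − m + γ_1 − γ_2 + 1) · m! · (N_2 − m)!) for 0 ≤ m ≤ N_2, and P : ℝ → ℝ by P(x) = Σ_{j=0}^{n} (−1)^j C(n,j) (−b)^(−j) · Π_{i=0}^{j−1} [(x − γ_1 − i)(x − γ_2 − i)] · Π_{i=0}^{n−j−1} [(N_1 − x + γ_1 − i)(N_2 − x + γ_2 − i)]. Then: (i) for each j ∈ {1,2}, W_j(m)·W_j(m') > 0 for all 0 ≤ m, m' ≤ N_j; (ii) P is the evaluation of a real polynomial of degree exactly 2n; (iii) for every j ∈ {1,2} and every natural number k < n, Σ_{m=0}^{N_j} P(γ_j + m)(γ_j + m)^k W_j(m) = 0. -/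

import Mathlib

/-!
On each lattice the weight `(-b)^m G(γⱼ + m)` is `(-b)^m` divided by Gamma values at positive
arguments and by one value `Γ(a - i)` with `a = N₂ - (γ₁ - γ₂) + 1 < 1` not an integer; since
`1/Γ(y - 1) = (y - 1)/Γ(y)`, the sign of `(-1)^i / Γ(a - i)` does not depend on `i`, which
compensates the sign of `(-b)^m`.

Each summand of `P` is a constant `cⱼ` times a monic polynomial of degree `2n`, and
`∑ cⱼ = (1 + 1/b)^n ≠ 0` is the leading coefficient.

Because `1/Γ` satisfies `1/Γ(y) = y/Γ(y + 1)` everywhere, the Rodrigues formula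
`P(x) G_N(x) = ∑ⱼ (-1)^j C(n,j) (-b)^(-j) G_{N-n}(x - j)` holds for every real `x`. On the first
lattice it writes `P W₁` as the backward difference `∇ⁿ` of the lowered weight, which vanishes
outside `{0, …, N₁ - n}`; summing by parts moves it onto `(γ₁ + m)^k` as a forward difference
`Δⁿ`, which kills polynomials of degree `k < n`. The second lattice is the first one after the
symmetry `(γ₁, N₁) ↔ (γ₂, N₂)` of `G` and `P`.
-/

open Finset Polynomial Real

namespace Real

theorem inv_Gamma_eq_mul_inv_Gamma_add_one (x : ℝ) : (Gamma x)⁻¹ = x * (Gamma (x + 1))⁻¹ := by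
  rcases eq_or_ne x 0 with rfl | hx
  · simp
  · rw [Gamma_add_one hx, mul_inv, ← mul_assoc, mul_inv_cancel₀ hx, one_mul]

theorem prod_range_sub_mul_inv_Gamma (y : ℝ) (p : ℕ) :
    (∏ i ∈ range p, (y - i)) * (Gamma (y + 1))⁻¹ = (Gamma (y - p + 1))⁻¹ := by
  induction p with
  | zero => simp
  | succ p ih =>
    rw [prod_range_succ, mul_right_comm, ih, Nat.cast_succ,
      inv_Gamma_eq_mul_inv_Gamma_add_one (y - (p + 1) + 1)]
    ring_nf

theorem Gamma_intCast_eq_zero_of_nonpos {z : ℤ} (hz : z ≤ 0) : Gamma z = 0 := by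
  obtain ⟨k, rfl⟩ := Int.exists_eq_neg_ofNat hz
  simpa using Gamma_neg_nat_eq_zero k

theorem neg_one_pow_mul_inv_Gamma_sub_nat_mul_Gamma_pos {a : ℝ} (ha : a < 1)
    (hΓ : Gamma a ≠ 0) (i : ℕ) : 0 < (-1) ^ i * (Gamma (a - i))⁻¹ * Gamma a := by
  induction i with
  | zero => simp [hΓ]
  | succ i ih =>
    have hrec : (Gamma (a - ↑(i + 1)))⁻¹ = (a - (i + 1)) * (Gamma (a - i))⁻¹ := by
      rw [inv_Gamma_eq_mul_inv_Gamma_add_one]; push_cast; ring_nf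
    have hi : 0 < (i + 1 : ℝ) - a := by have := i.cast_nonneg (α := ℝ); linarith
    calc (0 : ℝ) < ((i + 1) - a) * ((-1) ^ i * (Gamma (a - i))⁻¹ * Gamma a) := mul_pos hi ih
      _ = _ := by rw [hrec]; ring

theorem neg_one_pow_add_mul_inv_Gamma_sub_nat_mul_inv_Gamma_sub_nat_pos {a : ℝ} (ha : a < 1)
    (hΓ : Gamma a ≠ 0) (i j : ℕ) :
    0 < (-1) ^ (i + j) * ((Gamma (a - i))⁻¹ * (Gamma (a - j))⁻¹) := by
  have h := mul_pos (neg_one_pow_mul_inv_Gamma_sub_nat_mul_Gamma_pos ha hΓ i)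
    (neg_one_pow_mul_inv_Gamma_sub_nat_mul_Gamma_pos ha hΓ j)
  refine (mul_pos_iff_of_pos_right (mul_self_pos.2 hΓ)).1 (h.trans_eq ?_)
  ring

end Real

section Summation

variable {R : Type*} [CommRing R]

theorem sum_range_mul_comp_sub {q : ℕ → R} {w : ℤ → R} {N M j : ℕ} (hj : j + M ≤ N)
    (hw : ∀ ℓ, w ℓ ≠ 0 → 0 ≤ ℓ ∧ ℓ ≤ M) :
    ∑ m ∈ range (N + 1), q m * w (m - j) = ∑ ℓ ∈ range (M + 1), q (ℓ + j) * w ℓ := by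
  have hsub : Ico j (j + M + 1) ⊆ range (N + 1) := fun m hm => by
    simp only [mem_Ico, mem_range] at hm ⊢; omega
  rw [← sum_subset hsub, sum_Ico_eq_sum_range]
  · refine sum_congr (by congr 1; omega) fun ℓ _ => ?_
    rw [add_comm j ℓ]; push_cast; ring_nf
  · intro m _ hm
    by_contra hne
    have := hw _ (right_ne_zero_of_mul hne)
    simp only [mem_Ico] at hm; omega

theorem sum_mul_sum_comp_sub_eq_sum_mul_sum_comp_add (q : ℕ → R) (w : ℤ → R) (c : ℕ → R)
    {N n : ℕ} (hn : n ≤ N) (hw : ∀ ℓ, w ℓ ≠ 0 → 0 ≤ ℓ ∧ ℓ ≤ (N - n : ℕ)) :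
    ∑ m ∈ range (N + 1), q m * ∑ j ∈ range (n + 1), c j * w (m - j) =
      ∑ ℓ ∈ range (N - n + 1), w ℓ * ∑ j ∈ range (n + 1), c j * q (ℓ + j) := by
  simp only [mul_sum]
  rw [sum_comm, sum_comm (s := range (N - n + 1))]
  refine sum_congr rfl fun j hj => ?_
  have hj : j + (N - n) ≤ N := by simp only [mem_range] at hj; omega
  have := congrArg (c j * ·) (sum_range_mul_comp_sub (q := q) hj hw)
  simp only [mul_sum] at this
  convert this using 2 <;> ring

-- Up to the sign `(-1)^n` this is the `n`-th forward difference of `r ↦ r^k` at `y`.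
theorem sum_neg_one_pow_mul_choose_mul_pow_add_eq_zero {n k : ℕ} (hk : k < n) (y : R) :
    ∑ j ∈ range (n + 1), (-1) ^ j * (n.choose j : R) * (y + j) ^ k = 0 := by
  have h := fwdDiff_iter_comp_add (h := 1) (fun r : R => r ^ k) y n 0
  rw [fwdDiff_iter_pow_eq_zero_of_lt hk, fwdDiff_iter_eq_sum_shift] at h
  have hsign : ∀ j ∈ range (n + 1), ((-1 : R) ^ j * n.choose j * (y + j) ^ k) =
      (-1) ^ n * (((-1 : ℤ) ^ (n - j) * n.choose j) • (0 + j • (1 : R) + y) ^ k) := by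
    intro j hj
    have hexp : n + (n - j) = j + 2 * (n - j) := by simp only [mem_range] at hj; omega
    have hpow : (-1 : R) ^ j = (-1) ^ n * (-1) ^ (n - j) := by
      rw [← pow_add, hexp, pow_add, pow_mul, neg_one_sq, one_pow, mul_one]
    rw [zsmul_eq_mul, hpow, nsmul_one, zero_add, add_comm (j : R) y]
    push_cast
    ring
  rw [sum_congr rfl hsign, ← mul_sum, h, Pi.zero_apply, mul_zero]

end Summation

namespace Polynomial

variable {R : Type*} [CommRing R]

theorem monic_prod_X_sub_C_mul_X_sub_C [Nontrivial R] (f g : ℕ → R) (k : ℕ) :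
    (∏ i ∈ range k, (X - C (f i)) * (X - C (g i))).Monic ∧
      (∏ i ∈ range k, (X - C (f i)) * (X - C (g i))).natDegree = 2 * k := by
  rw [prod_mul_distrib]
  have hf := monic_prod_X_sub_C f (range k)
  have hg := monic_prod_X_sub_C g (range k)
  refine ⟨hf.mul hg, ?_⟩
  rw [hf.natDegree_mul hg, natDegree_finsetProd_X_sub_C_eq_card,
    natDegree_finsetProd_X_sub_C_eq_card, card_range, two_mul]

theorem degree_sum_C_mul_of_monic {ι : Type*} (s : Finset ι) (c : ι → R) (Q : ι → R[X]) {d : ℕ}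
    (hQ : ∀ i ∈ s, (Q i).Monic ∧ (Q i).natDegree = d) (hc : ∑ i ∈ s, c i ≠ 0) :
    (∑ i ∈ s, C (c i) * Q i).degree = d := by
  refine degree_eq_of_le_of_coeff_ne_zero ?_ ?_
  · refine (degree_sum_le _ _).trans (Finset.sup_le fun i hi => ?_)
    exact natDegree_le_iff_degree_le.1 ((natDegree_C_mul_le _ _).trans (hQ i hi).2.le)
  · rwa [finsetSum_coeff, sum_congr rfl fun i hi => by
      rw [coeff_C_mul, ← (hQ i hi).2, (hQ i hi).1.coeff_natDegree, mul_one]]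

end Polynomial

namespace AngelescoKravchuk

/-- The paper's `G_{N₁,N₂}(x)`, with real `N₁ N₂` so that they can be lowered by `n`. Mathlib's
`Gamma` is `0` at the poles, so the inverse is the entire function `1/Γ` there. -/
noncomputable def G (γ₁ γ₂ N₁ N₂ x : ℝ) : ℝ :=
  (Gamma (x - γ₁ + 1) * Gamma (N₁ - x + γ₁ + 1) * Gamma (x - γ₂ + 1) * Gamma (N₂ - x + γ₂ + 1))⁻¹

noncomputable def rodrigues (b γ₁ γ₂ N₁ N₂ : ℝ) (n : ℕ) (x : ℝ) : ℝ :=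
  ∑ j ∈ range (n + 1), (-1 : ℝ) ^ j * (n.choose j : ℝ) * (-b) ^ (-(j : ℤ)) *
    (∏ i ∈ range j, ((x - γ₁ - i) * (x - γ₂ - i))) *
    ∏ i ∈ range (n - j), ((N₁ - x + γ₁ - i) * (N₂ - x + γ₂ - i))

theorem G_comm (γ₁ γ₂ N₁ N₂ x : ℝ) : G γ₁ γ₂ N₁ N₂ x = G γ₂ γ₁ N₂ N₁ x := by
  simp only [G]; ring

theorem rodrigues_comm (b γ₁ γ₂ N₁ N₂ : ℝ) (n : ℕ) :
    rodrigues b γ₁ γ₂ N₁ N₂ n = rodrigues b γ₂ γ₁ N₂ N₁ n := by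
  ext x
  simp only [rodrigues, mul_comm (x - γ₁ - _), mul_comm (N₁ - x + γ₁ - _)]

theorem G_sub_natCast (γ₁ γ₂ N₁ N₂ x : ℝ) {n j : ℕ} (hj : j ≤ n) :
    G γ₁ γ₂ (N₁ - n) (N₂ - n) (x - j) =
      (∏ i ∈ range j, ((x - γ₁ - i) * (x - γ₂ - i))) *
        (∏ i ∈ range (n - j), ((N₁ - x + γ₁ - i) * (N₂ - x + γ₂ - i))) * G γ₁ γ₂ N₁ N₂ x := by
  have hlow : ∀ y : ℝ, y - (n - j : ℕ) + 1 = y - n - (-j) + 1 := fun y => by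
    push_cast [hj]; ring
  simp only [G, prod_mul_distrib, mul_inv]
  calc _ = (Gamma (x - γ₁ - j + 1))⁻¹ * (Gamma (N₁ - x + γ₁ - (n - j : ℕ) + 1))⁻¹ *
        (Gamma (x - γ₂ - j + 1))⁻¹ * (Gamma (N₂ - x + γ₂ - (n - j : ℕ) + 1))⁻¹ := by
        simp only [hlow]; ring_nf
    _ = _ := by
      simp only [← prod_range_sub_mul_inv_Gamma]
      ring

theorem rodrigues_mul_G (b γ₁ γ₂ N₁ N₂ : ℝ) (n : ℕ) (x : ℝ) :
    rodrigues b γ₁ γ₂ N₁ N₂ n x * G γ₁ γ₂ N₁ N₂ x =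
      ∑ j ∈ range (n + 1), (-1 : ℝ) ^ j * (n.choose j : ℝ) * (-b) ^ (-(j : ℤ)) *
        G γ₁ γ₂ (N₁ - n) (N₂ - n) (x - j) := by
  rw [rodrigues, sum_mul]
  refine sum_congr rfl fun j hj => ?_
  rw [G_sub_natCast _ _ _ _ _ (Nat.lt_succ_iff.1 (mem_range.1 hj))]
  ring

theorem G_add_intCast_ne_zero {γ₁ γ₂ N₂ : ℝ} {M : ℕ} {ℓ : ℤ} (h : G γ₁ γ₂ M N₂ (γ₁ + ℓ) ≠ 0) :
    0 ≤ ℓ ∧ ℓ ≤ M := by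
  simp only [G, ne_eq, inv_eq_zero, mul_eq_zero, not_or] at h
  obtain ⟨⟨⟨hlow, hhigh⟩, -⟩, -⟩ := h
  constructor
  · by_contra hℓ
    rw [show γ₁ + ℓ - γ₁ + 1 = ((ℓ + 1 : ℤ) : ℝ) by push_cast; ring] at hlow
    exact hlow (Gamma_intCast_eq_zero_of_nonpos (by omega))
  · by_contra hℓ
    rw [show (M : ℝ) - (γ₁ + ℓ) + γ₁ + 1 = ((M - ℓ + 1 : ℤ) : ℝ) by push_cast; ring] at hhigh
    exact hhigh (Gamma_intCast_eq_zero_of_nonpos (by omega))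

theorem sum_rodrigues_mul_pow_mul_weight_eq_zero {b : ℝ} (hb : b ≠ 0) (γ₁ γ₂ N₂ : ℝ)
    {N₁ n k : ℕ} (hn : n ≤ N₁) (hk : k < n) :
    ∑ m ∈ range (N₁ + 1), rodrigues b γ₁ γ₂ N₁ N₂ n (γ₁ + m) * (γ₁ + m) ^ k *
      ((-b) ^ m * G γ₁ γ₂ N₁ N₂ (γ₁ + m)) = 0 := by
  set w : ℤ → ℝ := fun ℓ => (-b) ^ ℓ * G γ₁ γ₂ (N₁ - n : ℕ) (N₂ - n) (γ₁ + ℓ)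
  have hrod : ∀ m : ℕ, rodrigues b γ₁ γ₂ N₁ N₂ n (γ₁ + m) * ((-b) ^ m * G γ₁ γ₂ N₁ N₂ (γ₁ + m)) =
      ∑ j ∈ range (n + 1), (-1) ^ j * (n.choose j : ℝ) * w (m - j) := by
    intro m
    rw [mul_left_comm, rodrigues_mul_G, mul_sum]
    refine sum_congr rfl fun j _ => ?_
    simp only [w, Nat.cast_sub hn, zpow_sub₀ (neg_ne_zero.2 hb), zpow_natCast, zpow_neg]
    push_cast
    rw [add_sub_assoc]
    ring
  have hw : ∀ ℓ, w ℓ ≠ 0 → 0 ≤ ℓ ∧ ℓ ≤ (N₁ - n : ℕ) :=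
    fun ℓ h => G_add_intCast_ne_zero (right_ne_zero_of_mul h)
  calc _ = ∑ m ∈ range (N₁ + 1), (γ₁ + m) ^ k *
        ∑ j ∈ range (n + 1), (-1) ^ j * (n.choose j : ℝ) * w (m - j) :=
        sum_congr rfl fun m _ => by rw [← hrod]; ring
    _ = ∑ ℓ ∈ range (N₁ - n + 1), w ℓ *
        ∑ j ∈ range (n + 1), (-1) ^ j * (n.choose j : ℝ) * (γ₁ + (ℓ + j : ℕ)) ^ k :=
        sum_mul_sum_comp_sub_eq_sum_mul_sum_comp_add _ _ _ hn hw
    _ = 0 := sum_eq_zero fun ℓ _ => by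
        simp only [Nat.cast_add, ← add_assoc, sum_neg_one_pow_mul_choose_mul_pow_add_eq_zero hk,
          mul_zero]

theorem exists_degree_rodrigues {b : ℝ} (hb : 0 < b) (γ₁ γ₂ N₁ N₂ : ℝ) (n : ℕ) :
    ∃ p : ℝ[X], p.degree = (2 * n : ℕ) ∧ ∀ x, rodrigues b γ₁ γ₂ N₁ N₂ n x = p.eval x := by
  let Q : ℕ → ℝ[X] := fun j =>
    (∏ i ∈ range j, (X - C (γ₁ + i)) * (X - C (γ₂ + i))) *
      ∏ i ∈ range (n - j), (X - C (N₁ + γ₁ - i)) * (X - C (N₂ + γ₂ - i))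
  let c : ℕ → ℝ := fun j => (-1) ^ j * n.choose j * (-b) ^ (-(j : ℤ))
  have hQ : ∀ j ∈ range (n + 1), (Q j).Monic ∧ (Q j).natDegree = 2 * n := fun j hj => by
    obtain ⟨h₁, d₁⟩ := monic_prod_X_sub_C_mul_X_sub_C (fun i => γ₁ + i) (fun i => γ₂ + i) j
    obtain ⟨h₂, d₂⟩ :=
      monic_prod_X_sub_C_mul_X_sub_C (fun i => N₁ + γ₁ - i) (fun i => N₂ + γ₂ - i) (n - j)
    refine ⟨h₁.mul h₂, ?_⟩
    rw [h₁.natDegree_mul h₂, d₁, d₂]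
    have := mem_range.1 hj
    omega
  have hc : ∑ j ∈ range (n + 1), c j = (b⁻¹ + 1) ^ n := by
    rw [add_pow]
    refine sum_congr rfl fun j _ => ?_
    rw [one_pow, mul_one, mul_comm]
    dsimp only [c]
    rw [mul_right_comm, zpow_neg, zpow_natCast, ← inv_pow, inv_neg, ← mul_pow, neg_one_mul,
      neg_neg, mul_comm]
  refine ⟨∑ j ∈ range (n + 1), C (c j) * Q j,
    degree_sum_C_mul_of_monic _ _ _ hQ (hc ▸ by positivity), fun x => ?_⟩
  simp only [rodrigues, eval_finsetSum, eval_mul, eval_C, eval_prod, eval_sub, eval_X, Q, c]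
  refine sum_congr rfl fun j _ => ?_
  rw [mul_assoc]
  congr 2 <;> exact prod_congr rfl fun i _ => by ring

theorem weight_mul_weight_pos_left {b γ₁ γ₂ : ℝ} (hb : 0 < b) {N₁ N₂ : ℕ}
    (hγ : (N₂ : ℝ) < γ₁ - γ₂) (hΓ : Gamma (N₂ - (γ₁ - γ₂) + 1) ≠ 0) {m m' : ℕ}
    (hm : m ≤ N₁) (hm' : m' ≤ N₁) :
    0 < (-b) ^ m * G γ₁ γ₂ N₁ N₂ (γ₁ + m) * ((-b) ^ m' * G γ₁ γ₂ N₁ N₂ (γ₁ + m')) := by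
  set a : ℝ := N₂ - (γ₁ - γ₂) + 1
  let D : ℕ → ℝ := fun m => Gamma (m + 1) * Gamma (N₁ - m + 1) * Gamma (m + (γ₁ - γ₂) + 1)
  have hD : ∀ m ≤ N₁, 0 < b ^ m * (D m)⁻¹ := fun m hm => by
    have : (m : ℝ) ≤ N₁ := by exact_mod_cast hm
    have : (0 : ℝ) ≤ N₂ := N₂.cast_nonneg
    refine mul_pos (pow_pos hb m) (inv_pos.2 (mul_pos (mul_pos ?_ ?_) ?_)) <;>
      exact Gamma_pos_of_pos (by linarith)
  have hG : ∀ m : ℕ, (-b) ^ m * G γ₁ γ₂ N₁ N₂ (γ₁ + m) =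
      b ^ m * (D m)⁻¹ * ((-1) ^ m * (Gamma (a - m))⁻¹) := fun m => by
    simp only [G, D, a]
    rw [show γ₁ + m - γ₁ + 1 = m + 1 by ring, show (N₁ : ℝ) - (γ₁ + m) + γ₁ + 1 = N₁ - m + 1 by ring,
      show γ₁ + m - γ₂ + 1 = m + (γ₁ - γ₂) + 1 by ring,
      show (N₂ : ℝ) - (γ₁ + m) + γ₂ + 1 = N₂ - (γ₁ - γ₂) + 1 - m by ring, neg_pow]
    ring
  rw [hG, hG]
  have hsign := neg_one_pow_add_mul_inv_Gamma_sub_nat_mul_inv_Gamma_sub_nat_pos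
    (by linarith : a < 1) hΓ m m'
  calc (0 : ℝ) < b ^ m * (D m)⁻¹ * (b ^ m' * (D m')⁻¹) *
        ((-1) ^ (m + m') * ((Gamma (a - m))⁻¹ * (Gamma (a - m'))⁻¹)) :=
        mul_pos (mul_pos (hD m hm) (hD m' hm')) hsign
    _ = _ := by ring

theorem weight_mul_weight_pos_right {b γ₁ γ₂ : ℝ} (hb : 0 < b) {N₁ N₂ : ℕ}
    (hγ : (N₂ : ℝ) < γ₁ - γ₂) (hΓ : Gamma (N₂ - (γ₁ - γ₂) + 1) ≠ 0) {m m' : ℕ}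
    (hm : m ≤ N₂) (hm' : m' ≤ N₂) :
    0 < (-b) ^ m * G γ₁ γ₂ N₁ N₂ (γ₂ + m) * ((-b) ^ m' * G γ₁ γ₂ N₁ N₂ (γ₂ + m')) := by
  set a : ℝ := N₂ - (γ₁ - γ₂) + 1
  let D : ℕ → ℝ := fun m => Gamma (N₁ - m + (γ₁ - γ₂) + 1) * Gamma (m + 1) * Gamma (N₂ - m + 1)
  have hD : ∀ m ≤ N₂, 0 < b ^ m * (D m)⁻¹ := fun m hm => by
    have : (m : ℝ) ≤ N₂ := by exact_mod_cast hm
    have : (0 : ℝ) ≤ N₁ := N₁.cast_nonneg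
    refine mul_pos (pow_pos hb m) (inv_pos.2 (mul_pos (mul_pos ?_ ?_) ?_)) <;>
      exact Gamma_pos_of_pos (by linarith)
  have hG : ∀ m ≤ N₂, (-b) ^ m * G γ₁ γ₂ N₁ N₂ (γ₂ + m) =
      b ^ m * (D m)⁻¹ * ((-1) ^ m * (Gamma (a - (N₂ - m : ℕ)))⁻¹) := fun m hm => by
    simp only [G, D, a]
    rw [show γ₂ + m - γ₁ + 1 = N₂ - (γ₁ - γ₂) + 1 - (N₂ - m : ℕ) by push_cast [hm]; ring,
      show (N₁ : ℝ) - (γ₂ + m) + γ₁ + 1 = N₁ - m + (γ₁ - γ₂) + 1 by ring,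
      show γ₂ + m - γ₂ + 1 = m + 1 by ring,
      show (N₂ : ℝ) - (γ₂ + m) + γ₂ + 1 = N₂ - m + 1 by ring, neg_pow]
    ring
  rw [hG m hm, hG m' hm']
  have hsign := neg_one_pow_add_mul_inv_Gamma_sub_nat_mul_inv_Gamma_sub_nat_pos
    (by linarith : a < 1) hΓ (N₂ - m) (N₂ - m')
  have hparity : (-1 : ℝ) ^ (N₂ - m + (N₂ - m')) = (-1) ^ (m + m') := by
    rw [neg_one_pow_eq_pow_mod_two, neg_one_pow_eq_pow_mod_two (n := m + m')]
    congr 1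
    omega
  rw [hparity] at hsign
  calc (0 : ℝ) < b ^ m * (D m)⁻¹ * (b ^ m' * (D m')⁻¹) *
        ((-1) ^ (m + m') * ((Gamma (a - (N₂ - m : ℕ)))⁻¹ * (Gamma (a - (N₂ - m' : ℕ)))⁻¹)) :=
        mul_pos (mul_pos (hD m hm) (hD m' hm')) hsign
    _ = _ := by ring

theorem weight_left_eq (b γ₁ γ₂ : ℝ) {N₁ N₂ m : ℕ} (hm : m ≤ N₁) :
    (-b) ^ m / ((m.factorial : ℝ) * ((N₁ - m).factorial : ℝ) *
      Gamma ((m : ℝ) + γ₁ - γ₂ + 1) * Gamma ((N₂ : ℝ) - m - γ₁ + γ₂ + 1)) =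
      (-b) ^ m * G γ₁ γ₂ N₁ N₂ (γ₁ + m) := by
  rw [div_eq_mul_inv, G, ← Gamma_nat_eq_factorial, ← Gamma_nat_eq_factorial, Nat.cast_sub hm]
  ring_nf

theorem weight_right_eq (b γ₁ γ₂ : ℝ) {N₁ N₂ m : ℕ} (hm : m ≤ N₂) :
    (-b) ^ m / (Gamma ((m : ℝ) + γ₂ - γ₁ + 1) * Gamma ((N₁ : ℝ) - m + γ₁ - γ₂ + 1) *
      (m.factorial : ℝ) * ((N₂ - m).factorial : ℝ)) =
      (-b) ^ m * G γ₁ γ₂ N₁ N₂ (γ₂ + m) := by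
  rw [div_eq_mul_inv, G, ← Gamma_nat_eq_factorial, ← Gamma_nat_eq_factorial, Nat.cast_sub hm]
  ring_nf

end AngelescoKravchuk

open AngelescoKravchuk

/-- The paper's Angelesco–Kravchuk family (Case II, disjoint supports): the weights `W_j`
on the shifted lattices `γ_j + {0,…,N_j}` have constant sign, the Rodrigues polynomial
`P` has degree exactly `2n`, and `P` is orthogonal to `x^k`, `k < n`, with respect to
both discrete measures. -/
theorem stmt_16 (b : ℝ) (hb : 0 < b) (N₁ N₂ n : ℕ) (hnN : n ≤ min N₁ N₂) (γ₁ γ₂ : ℝ)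
    (hγN : γ₁ - γ₂ > N₂) (hγZ : ∀ z : ℤ, γ₁ - γ₂ ≠ (z : ℝ)) (W₁ W₂ : ℕ → ℝ)
    (hW₁ : ∀ m : ℕ, m ≤ N₁ → W₁ m = (-b) ^ m /
      ((m.factorial : ℝ) * ((N₁ - m).factorial : ℝ) *
        Real.Gamma ((m : ℝ) + γ₁ - γ₂ + 1) * Real.Gamma ((N₂ : ℝ) - m - γ₁ + γ₂ + 1)))
    (hW₂ : ∀ m : ℕ, m ≤ N₂ → W₂ m = (-b) ^ m /
      (Real.Gamma ((m : ℝ) + γ₂ - γ₁ + 1) * Real.Gamma ((N₁ : ℝ) - m + γ₁ - γ₂ + 1) *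
        (m.factorial : ℝ) * ((N₂ - m).factorial : ℝ)))
    (P : ℝ → ℝ)
    (hP : ∀ x : ℝ, P x = ∑ j ∈ Finset.range (n + 1),
      (-1 : ℝ) ^ j * (n.choose j : ℝ) * (-b) ^ (-(j : ℤ)) *
        (∏ i ∈ Finset.range j, ((x - γ₁ - (i : ℝ)) * (x - γ₂ - (i : ℝ)))) *
        ∏ i ∈ Finset.range (n - j),
          (((N₁ : ℝ) - x + γ₁ - (i : ℝ)) * ((N₂ : ℝ) - x + γ₂ - (i : ℝ)))) :
    (∀ m m' : ℕ, m ≤ N₁ → m' ≤ N₁ → 0 < W₁ m * W₁ m') ∧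
    (∀ m m' : ℕ, m ≤ N₂ → m' ≤ N₂ → 0 < W₂ m * W₂ m') ∧
    (∃ p : Polynomial ℝ, p.degree = (2 * n : ℕ) ∧ ∀ x : ℝ, P x = p.eval x) ∧
    (∀ k : ℕ, k < n →
      ∑ m ∈ Finset.range (N₁ + 1), P (γ₁ + m) * (γ₁ + m) ^ k * W₁ m = 0 ∧
      ∑ m ∈ Finset.range (N₂ + 1), P (γ₂ + m) * (γ₂ + m) ^ k * W₂ m = 0) := by
  have hP : P = rodrigues b γ₁ γ₂ N₁ N₂ n := funext hP
  have hW₁ : ∀ m ≤ N₁, W₁ m = (-b) ^ m * G γ₁ γ₂ N₁ N₂ (γ₁ + m) :=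
    fun m hm => (hW₁ m hm).trans (weight_left_eq b γ₁ γ₂ hm)
  have hW₂ : ∀ m ≤ N₂, W₂ m = (-b) ^ m * G γ₁ γ₂ N₁ N₂ (γ₂ + m) :=
    fun m hm => (hW₂ m hm).trans (weight_right_eq b γ₁ γ₂ hm)
  have hΓ : Gamma (N₂ - (γ₁ - γ₂) + 1) ≠ 0 := Gamma_ne_zero fun k h =>
    hγZ (N₂ + k + 1) (by push_cast; linarith)
  obtain ⟨hn₁, hn₂⟩ := le_min_iff.1 hnN
  refine ⟨fun m m' hm hm' => ?_, fun m m' hm hm' => ?_, ?_, fun k hk => ⟨?_, ?_⟩⟩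
  · rw [hW₁ m hm, hW₁ m' hm']
    exact weight_mul_weight_pos_left hb hγN hΓ hm hm'
  · rw [hW₂ m hm, hW₂ m' hm']
    exact weight_mul_weight_pos_right hb hγN hΓ hm hm'
  · obtain ⟨p, hp, hev⟩ := exists_degree_rodrigues hb γ₁ γ₂ N₁ N₂ n
    exact ⟨p, hp, hP ▸ hev⟩
  · rw [sum_congr rfl fun m hm => by rw [hP, hW₁ m (Nat.lt_succ_iff.1 (mem_range.1 hm))]]
    exact sum_rodrigues_mul_pow_mul_weight_eq_zero hb.ne' γ₁ γ₂ N₂ hn₁ hk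
  · rw [sum_congr rfl fun m hm => by
      rw [hP, hW₂ m (Nat.lt_succ_iff.1 (mem_range.1 hm)), rodrigues_comm, G_comm]]
    exact sum_rodrigues_mul_pow_mul_weight_eq_zero hb.ne' γ₂ γ₁ N₁ hn₂ hk
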